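/- Let n ≥ 1, N ≥ 1, and let F = (f_{ij}) be a real symmetric positive definite N×N matrix with f_{ij} ≤ 0 for i ≠ j. If f belongs to the cone 𝓔_G, then E f ≥ 0 (first Griffiths inequality for Gaussian ferromagnetic spins). -/

import Mathlib

/-!
Split the density as the diagonal weight `∏ᵢ exp(-fᵢᵢ |xᵢ|² / 2)` times `exp T`, where
`T = ½ ∑_{i ≠ j} (-fᵢⱼ) xᵢ · xⱼ` lies in `𝓔_G` because the couplings are ferromagnetic.
Expanding `exp T` in its power series, each term `f Tᵐ / m!` lies in `𝓔_G` again, hence is a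
nonnegative combination of monomials in the coordinates `x_{iα}`. Against the diagonal weight such
a monomial integrates to a product of one-dimensional Gaussian moments, which are nonnegative since
odd moments vanish. Dominated convergence justifies integrating term by term: `|f| exp |T|` times
the diagonal weight is at most `|f| exp(-ε ∑ᵢ |xᵢ|² / 2)`, where `ε > 0` bounds the quadratic
form of `F` from below, evaluated at the vector of norms `(|xᵢ|)ᵢ`.
-/

open MeasureTheory RealInnerProductSpace Real

/-- The cone `𝓔_G` of finite linear combinations with nonnegative coefficients of
monomials `∏_{1 ≤ i ≤ j ≤ N} (x_i · x_j)^{n_{ij}}`, for variables `x_1,…,x_N ∈ ℝ^n`. -/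
def InConeG (n N : ℕ) (f : (Fin N → EuclideanSpace ℝ (Fin n)) → ℝ) : Prop :=
  ∃ (K : ℕ) (c : Fin K → ℝ) (e : Fin K → Fin N → Fin N → ℕ),
    (∀ k, 0 ≤ c k) ∧
    ∀ x, f x = ∑ k, c k *
      ∏ p ∈ Finset.univ.filter (fun p : Fin N × Fin N => p.1 ≤ p.2),
        (⟪x p.1, x p.2⟫ : ℝ) ^ e k p.1 p.2

/-- The (unnormalized) ferromagnetic Gaussian density `exp(-∑_{i,j} f_{ij} x_i·x_j / 2)`. -/
noncomputable def gaussDensity (n N : ℕ) (F : Matrix (Fin N) (Fin N) ℝ)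
    (x : Fin N → EuclideanSpace ℝ (Fin n)) : ℝ :=
  Real.exp (-(∑ i, ∑ j, F i j * (⟪x i, x j⟫ : ℝ)) / 2)

open scoped Nat Matrix

namespace GaussianSpin

lemma integrable_pow_mul_exp_neg_mul_sq {b : ℝ} (hb : 0 < b) (m : ℕ) :
    Integrable fun t : ℝ => t ^ m * exp (-b * t ^ 2) := by
  simpa [Real.rpow_natCast] using
    integrable_rpow_mul_exp_neg_mul_sq hb (s := m) (by linarith [m.cast_nonneg (α := ℝ)])

lemma integral_pow_mul_exp_neg_mul_sq_nonneg (b : ℝ) (m : ℕ) :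
    0 ≤ ∫ t : ℝ, t ^ m * exp (-b * t ^ 2) := by
  rcases Nat.even_or_odd m with hm | hm
  · exact integral_nonneg fun t => mul_nonneg (hm.pow_nonneg t) (exp_pos _).le
  · have hodd : ∫ t : ℝ, t ^ m * exp (-b * t ^ 2) = -∫ t : ℝ, t ^ m * exp (-b * t ^ 2) := by
      conv_lhs => rw [← integral_neg_eq_self]
      rw [← integral_neg]
      simp [hm.neg_pow]
    linarith

lemma hasSum_integral_mul_pow_div_factorial {X : Type*} [MeasurableSpace X] {μ : Measure X}
    {g T : X → ℝ} (hg : AEStronglyMeasurable g μ) (hT : AEStronglyMeasurable T μ)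
    (hint : Integrable (fun x => g x * exp |T x|) μ) :
    HasSum (fun m => ∫ x, g x * (T x ^ m / m !) ∂μ) (∫ x, g x * exp (T x) ∂μ) := by
  refine hasSum_integral_of_dominated_convergence (fun m x => |g x| * (|T x| ^ m / m !))
    (fun m => by fun_prop) (fun m => ae_of_all _ fun x => ?_)
    (ae_of_all _ fun x => (Real.summable_pow_div_factorial _).mul_left _) ?_
    (ae_of_all _ fun x => ?_)
  · simp
  · refine hint.abs.congr (ae_of_all _ fun x => ?_)
    beta_reduce
    rw [abs_mul, abs_of_pos (exp_pos _), tsum_mul_left, Real.exp_eq_exp_ℝ,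
      NormedSpace.exp_eq_tsum_div]
  · rw [Real.exp_eq_exp_ℝ]
    exact (NormedSpace.expSeries_div_hasSum_exp (T x)).mul_left (g x)

lemma diagonal_diag_sub_nonneg {ι : Type*} [DecidableEq ι] {F : Matrix ι ι ℝ}
    (hferro : ∀ i j, i ≠ j → F i j ≤ 0) (i j : ι) :
    0 ≤ (Matrix.diagonal F.diag - F) i j := by
  by_cases h : i = j <;> simp [h, hferro i j]

variable {ι κ : Type*} [Fintype ι] [Fintype κ]

lemma _root_.Matrix.PosDef.exists_pos_mul_dotProduct_self_le {A : Matrix ι ι ℝ} (hA : A.PosDef) :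
    ∃ ε > 0, ∀ v : ι → ℝ, ε * (v ⬝ᵥ v) ≤ v ⬝ᵥ A *ᵥ v := by
  cases isEmpty_or_nonempty ι
  · exact ⟨1, one_pos, fun v => by simp [dotProduct]⟩
  set q : EuclideanSpace ℝ ι → ℝ := fun w => w.ofLp ⬝ᵥ A *ᵥ w.ofLp
  have hq : Continuous q := by fun_prop
  obtain ⟨w₀, hw₀, hmin⟩ := (isCompact_sphere (0 : EuclideanSpace ℝ ι) 1).exists_isMinOn
    (NormedSpace.sphere_nonempty.2 zero_le_one) hq.continuousOn
  have hw₀ : w₀.ofLp ≠ 0 := by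
    rintro h
    simp [show w₀ = 0 from WithLp.ofLp_injective 2 h] at hw₀
  refine ⟨q w₀, by simpa using hA.dotProduct_mulVec_pos hw₀, fun v => ?_⟩
  rcases eq_or_ne v 0 with rfl | hv
  · simp
  set w := WithLp.toLp 2 v
  have hr : 0 < ‖w‖ := norm_pos_iff.2 (by simpa [w] using hv)
  have hvv : v ⬝ᵥ v = ‖w‖ ^ 2 := by
    rw [EuclideanSpace.real_norm_sq_eq]
    simp [w, dotProduct, sq]
  have hscale : q w₀ ≤ (‖w‖⁻¹) ^ 2 * q w := by
    have := hmin (show ‖w‖⁻¹ • w ∈ Metric.sphere 0 1 by simp [norm_smul, hr.ne'])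
    simpa [q, Matrix.mulVec_smul, sq, mul_assoc] using this
  rw [hvv]
  calc q w₀ * ‖w‖ ^ 2 ≤ (‖w‖⁻¹) ^ 2 * q w * ‖w‖ ^ 2 := by gcongr
    _ = v ⬝ᵥ A *ᵥ v := by field_simp; rfl

lemma integral_prod_prod_apply (h : ι → κ → ℝ → ℝ) :
    ∫ x : ι → EuclideanSpace ℝ κ, ∏ i, ∏ α, h i α (x i α) = ∏ i, ∏ α, ∫ t, h i α t := by
  rw [integral_fintype_prod_volume_eq_prod (fun i (v : EuclideanSpace ℝ κ) => ∏ α, h i α (v α))]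
  refine Finset.prod_congr rfl fun i _ => ?_
  rw [← integral_fintype_prod_volume_eq_prod (h i),
    ← (EuclideanSpace.volume_preserving_symm_measurableEquiv_toLp κ).integral_comp']
  rfl

lemma integrable_prod_prod_apply {h : ι → κ → ℝ → ℝ} (hh : ∀ i α, Integrable (h i α)) :
    Integrable fun x : ι → EuclideanSpace ℝ κ => ∏ i, ∏ α, h i α (x i α) := by
  refine Integrable.fintype_prod (f := fun i (v : EuclideanSpace ℝ κ) => ∏ α, h i α (v α))
    fun i => ?_
  exact ((EuclideanSpace.volume_preserving_symm_measurableEquiv_toLp κ).integrable_comp_emb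
    (MeasurableEquiv.measurableEmbedding _)).2 (Integrable.fintype_prod (hh i))

inductive HasNonnegCoeffs : ((ι → EuclideanSpace ℝ κ) → ℝ) → Prop
  | monomial (r : ℝ) (hr : 0 ≤ r) (m : ι → κ → ℕ) :
      HasNonnegCoeffs fun x => r * ∏ i, ∏ α, x i α ^ m i α
  | add {g h} : HasNonnegCoeffs g → HasNonnegCoeffs h → HasNonnegCoeffs fun x => g x + h x

namespace HasNonnegCoeffs

variable {g h : (ι → EuclideanSpace ℝ κ) → ℝ}

lemma const {r : ℝ} (hr : 0 ≤ r) : HasNonnegCoeffs (ι := ι) (κ := κ) fun _ => r := by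
  simpa using monomial (ι := ι) (κ := κ) r hr 0

lemma mul (hg : HasNonnegCoeffs g) (hh : HasNonnegCoeffs h) :
    HasNonnegCoeffs fun x => g x * h x := by
  induction hg with
  | monomial r hr m =>
    induction hh with
    | monomial r' hr' m' =>
      convert monomial (r * r') (mul_nonneg hr hr') (m + m') using 2 with x
      simp only [Pi.add_apply, pow_add, Finset.prod_mul_distrib]
      ring
    | add _ _ ih₁ ih₂ => simpa only [mul_add] using ih₁.add ih₂
  | add _ _ ih₁ ih₂ => simpa only [add_mul] using ih₁.add ih₂

lemma const_mul {r : ℝ} (hr : 0 ≤ r) (hg : HasNonnegCoeffs g) :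
    HasNonnegCoeffs fun x => r * g x :=
  (const hr).mul hg

lemma div_const {r : ℝ} (hr : 0 ≤ r) (hg : HasNonnegCoeffs g) :
    HasNonnegCoeffs fun x => g x / r := by
  simpa only [div_eq_inv_mul] using hg.const_mul (inv_nonneg.2 hr)

lemma pow (hg : HasNonnegCoeffs g) (m : ℕ) : HasNonnegCoeffs fun x => g x ^ m := by
  induction m with
  | zero => simpa using const (ι := ι) (κ := κ) zero_le_one
  | succ m ih => simpa only [pow_succ] using ih.mul hg

lemma sum {τ : Type*} (s : Finset τ) {g : τ → (ι → EuclideanSpace ℝ κ) → ℝ}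
    (hg : ∀ t ∈ s, HasNonnegCoeffs (g t)) : HasNonnegCoeffs fun x => ∑ t ∈ s, g t x := by
  classical
  induction s using Finset.induction_on with
  | empty => simpa using const (ι := ι) (κ := κ) le_rfl
  | insert t s hts ih =>
    simp only [Finset.sum_insert hts]
    exact (hg t (s.mem_insert_self t)).add (ih fun u hu => hg u (Finset.mem_insert_of_mem hu))

lemma prod {τ : Type*} (s : Finset τ) {g : τ → (ι → EuclideanSpace ℝ κ) → ℝ}
    (hg : ∀ t ∈ s, HasNonnegCoeffs (g t)) : HasNonnegCoeffs fun x => ∏ t ∈ s, g t x := by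
  classical
  induction s using Finset.induction_on with
  | empty => simpa using const (ι := ι) (κ := κ) zero_le_one
  | insert t s hts ih =>
    simp only [Finset.prod_insert hts]
    exact (hg t (s.mem_insert_self t)).mul (ih fun u hu => hg u (Finset.mem_insert_of_mem hu))

lemma coord (i : ι) (α : κ) : HasNonnegCoeffs fun x : ι → EuclideanSpace ℝ κ => x i α := by
  classical
  convert monomial 1 zero_le_one (fun j β => if j = i ∧ β = α then 1 else 0) using 2 with x
  rw [one_mul, Finset.prod_eq_single i (fun j _ hj => by simp [hj]) (by simp),
    Finset.prod_eq_single α (fun β _ hβ => by simp [hβ]) (by simp)]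
  simp

lemma inner (i j : ι) : HasNonnegCoeffs fun x : ι → EuclideanSpace ℝ κ => ⟪x i, x j⟫ := by
  simpa [PiLp.inner_apply, mul_comm] using
    sum Finset.univ fun α _ => (coord (κ := κ) i α).mul (coord j α)

lemma continuous (hg : HasNonnegCoeffs g) : Continuous g := by
  induction hg with
  | monomial r hr m => fun_prop
  | add _ _ ih₁ ih₂ => exact ih₁.add ih₂

end HasNonnegCoeffs

noncomputable def diagGaussWeight (a : ι → ℝ) (x : ι → EuclideanSpace ℝ κ) : ℝ :=
  exp (-(∑ i, a i * ‖x i‖ ^ 2) / 2)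

lemma diagGaussWeight_eq_prod (a : ι → ℝ) (x : ι → EuclideanSpace ℝ κ) :
    diagGaussWeight a x = ∏ i, ∏ α, exp (-(a i / 2) * x i α ^ 2) := by
  simp only [diagGaussWeight, EuclideanSpace.real_norm_sq_eq, ← exp_sum]
  congr 1
  simp only [Finset.mul_sum, ← Finset.sum_neg_distrib, Finset.sum_div]
  exact Finset.sum_congr rfl fun i _ => Finset.sum_congr rfl fun α _ => by ring

lemma diagGaussWeight_pos (a : ι → ℝ) (x : ι → EuclideanSpace ℝ κ) : 0 < diagGaussWeight a x :=
  exp_pos _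

lemma continuous_diagGaussWeight (a : ι → ℝ) : Continuous (diagGaussWeight (κ := κ) a) := by
  unfold diagGaussWeight
  fun_prop

lemma monomial_mul_diagGaussWeight {a : ι → ℝ} (r : ℝ) (m : ι → κ → ℕ)
    (x : ι → EuclideanSpace ℝ κ) :
    (r * ∏ i, ∏ α, x i α ^ m i α) * diagGaussWeight a x =
      r * ∏ i, ∏ α, x i α ^ m i α * exp (-(a i / 2) * x i α ^ 2) := by
  simp only [diagGaussWeight_eq_prod, mul_assoc, ← Finset.prod_mul_distrib]

namespace HasNonnegCoeffs

variable {g : (ι → EuclideanSpace ℝ κ) → ℝ} {a : ι → ℝ}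

lemma integrable_mul_diagGaussWeight (hg : HasNonnegCoeffs g) (ha : ∀ i, 0 < a i) :
    Integrable fun x => g x * diagGaussWeight a x := by
  induction hg with
  | monomial r hr m =>
    simp only [monomial_mul_diagGaussWeight]
    exact (integrable_prod_prod_apply fun i α =>
      integrable_pow_mul_exp_neg_mul_sq (half_pos (ha i)) (m i α)).const_mul r
  | add _ _ ih₁ ih₂ =>
    simp only [add_mul]
    exact ih₁.add ih₂

lemma integral_mul_diagGaussWeight_nonneg (hg : HasNonnegCoeffs g) (ha : ∀ i, 0 < a i) :
    0 ≤ ∫ x, g x * diagGaussWeight a x := by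
  induction hg with
  | monomial r hr m =>
    simp only [monomial_mul_diagGaussWeight, integral_const_mul]
    rw [integral_prod_prod_apply fun i α t => t ^ m i α * exp (-(a i / 2) * t ^ 2)]
    exact mul_nonneg hr (Finset.prod_nonneg fun i _ => Finset.prod_nonneg fun α _ =>
      integral_pow_mul_exp_neg_mul_sq_nonneg _ _)
  | add hg₁ hg₂ ih₁ ih₂ =>
    simp only [add_mul]
    rw [integral_add (hg₁.integrable_mul_diagGaussWeight ha)
      (hg₂.integrable_mul_diagGaussWeight ha)]
    exact add_nonneg ih₁ ih₂

end HasNonnegCoeffs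

noncomputable def spinEnergy (J : Matrix ι ι ℝ) (x : ι → EuclideanSpace ℝ κ) : ℝ :=
  ∑ i, ∑ j, J i j * ⟪x i, x j⟫

lemma spinEnergy_sub (A B : Matrix ι ι ℝ) (x : ι → EuclideanSpace ℝ κ) :
    spinEnergy (A - B) x = spinEnergy A x - spinEnergy B x := by
  simp [spinEnergy, sub_mul]

lemma spinEnergy_diagonal [DecidableEq ι] (a : ι → ℝ) (x : ι → EuclideanSpace ℝ κ) :
    spinEnergy (Matrix.diagonal a) x = ∑ i, a i * ‖x i‖ ^ 2 := by
  simp [spinEnergy, Matrix.diagonal_apply, ite_mul]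

lemma abs_spinEnergy_le {J : Matrix ι ι ℝ} (hJ : ∀ i j, 0 ≤ J i j)
    (x : ι → EuclideanSpace ℝ κ) :
    |spinEnergy J x| ≤ (fun i => ‖x i‖) ⬝ᵥ J *ᵥ (fun i => ‖x i‖) := by
  simp only [dotProduct, Matrix.mulVec, Finset.mul_sum]
  refine (Finset.abs_sum_le_sum_abs _ _).trans (Finset.sum_le_sum fun i _ => ?_)
  refine (Finset.abs_sum_le_sum_abs _ _).trans (Finset.sum_le_sum fun j _ => ?_)
  rw [abs_mul, abs_of_nonneg (hJ i j)]
  nlinarith [abs_real_inner_le_norm (x i) (x j), hJ i j]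

lemma HasNonnegCoeffs.spinEnergy {J : Matrix ι ι ℝ} (hJ : ∀ i j, 0 ≤ J i j) :
    HasNonnegCoeffs (spinEnergy (κ := κ) J) :=
  sum _ fun i _ => sum _ fun j _ => const_mul (hJ i j) (inner i j)

section Ferromagnetic

variable [DecidableEq ι] {F : Matrix ι ι ℝ}

lemma exp_neg_spinEnergy_div_two (x : ι → EuclideanSpace ℝ κ) :
    exp (-spinEnergy F x / 2) =
      diagGaussWeight F.diag x * exp (spinEnergy (Matrix.diagonal F.diag - F) x / 2) := by
  rw [diagGaussWeight, spinEnergy_sub, spinEnergy_diagonal, ← exp_add]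
  ring_nf

lemma exp_abs_spinEnergy_mul_diagGaussWeight_le {ε : ℝ} (hε : ∀ v, ε * (v ⬝ᵥ v) ≤ v ⬝ᵥ F *ᵥ v)
    (hferro : ∀ i j, i ≠ j → F i j ≤ 0) (x : ι → EuclideanSpace ℝ κ) :
    exp (|spinEnergy (Matrix.diagonal F.diag - F) x| / 2) * diagGaussWeight F.diag x ≤
      diagGaussWeight (fun _ => ε) x := by
  set v : ι → ℝ := fun i => ‖x i‖
  have habs := abs_spinEnergy_le (diagonal_diag_sub_nonneg hferro) x
  have hF := hε v
  have hdiag : v ⬝ᵥ Matrix.diagonal F.diag *ᵥ v = ∑ i, F i i * ‖x i‖ ^ 2 := by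
    simp [v, dotProduct, Matrix.mulVec_diagonal, sq, mul_left_comm]
  have hvv : v ⬝ᵥ v = ∑ i, ‖x i‖ ^ 2 := by simp [v, dotProduct, sq]
  rw [Matrix.sub_mulVec, dotProduct_sub, hdiag] at habs
  rw [hvv] at hF
  rw [diagGaussWeight, diagGaussWeight, ← exp_add, exp_le_exp, ← Finset.mul_sum]
  simp only [Matrix.diag_apply]
  linarith

lemma integrable_mul_diagGaussWeight_mul_exp_abs (hF : F.PosDef)
    (hferro : ∀ i j, i ≠ j → F i j ≤ 0) {g : (ι → EuclideanSpace ℝ κ) → ℝ}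
    (hg : HasNonnegCoeffs g) :
    Integrable fun x => g x * diagGaussWeight F.diag x *
      exp |spinEnergy (Matrix.diagonal F.diag - F) x / 2| := by
  obtain ⟨ε, hε, hεF⟩ := hF.exists_pos_mul_dotProduct_self_le
  have hT := (HasNonnegCoeffs.spinEnergy (κ := κ) (diagonal_diag_sub_nonneg hferro)).continuous
  have hw := continuous_diagGaussWeight (κ := κ) F.diag
  refine (hg.integrable_mul_diagGaussWeight (a := fun _ => ε) fun _ => hε).abs.mono'
    (by have := hg.continuous; fun_prop) (ae_of_all _ fun x => ?_)
  have hdom := exp_abs_spinEnergy_mul_diagGaussWeight_le hεF hferro x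
  rw [Real.norm_eq_abs, abs_mul, abs_mul, abs_mul, abs_of_pos (exp_pos _),
    abs_of_pos (diagGaussWeight_pos _ x), abs_of_pos (diagGaussWeight_pos _ x), abs_div, abs_two,
    mul_assoc]
  gcongr
  rwa [mul_comm]

end Ferromagnetic

theorem integral_mul_exp_neg_spinEnergy_nonneg {F : Matrix ι ι ℝ} (hF : F.PosDef)
    (hferro : ∀ i j, i ≠ j → F i j ≤ 0) {g : (ι → EuclideanSpace ℝ κ) → ℝ}
    (hg : HasNonnegCoeffs g) : 0 ≤ ∫ x, g x * exp (-spinEnergy F x / 2) := by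
  classical
  have hT : HasNonnegCoeffs fun x : ι → EuclideanSpace ℝ κ =>
      spinEnergy (Matrix.diagonal F.diag - F) x / 2 :=
    (HasNonnegCoeffs.spinEnergy (diagonal_diag_sub_nonneg hferro)).div_const zero_le_two
  have hseries := hasSum_integral_mul_pow_div_factorial (μ := volume)
    (g := fun x => g x * diagGaussWeight F.diag x)
    (hg.continuous.mul (continuous_diagGaussWeight F.diag)).aestronglyMeasurable
    hT.continuous.aestronglyMeasurable (integrable_mul_diagGaussWeight_mul_exp_abs hF hferro hg)
  simp only [mul_assoc, ← exp_neg_spinEnergy_div_two] at hseries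
  refine hseries.nonneg fun m => ?_
  refine ((hg.mul (hT.pow m)).div_const (Nat.cast_nonneg (α := ℝ) m !)
    |>.integral_mul_diagGaussWeight_nonneg (a := F.diag) fun i => hF.diag_pos).trans_eq ?_
  exact integral_congr_ae (ae_of_all _ fun x => by ring)

end GaussianSpin

open GaussianSpin in
lemma InConeG.hasNonnegCoeffs {n N : ℕ} {f : (Fin N → EuclideanSpace ℝ (Fin n)) → ℝ}
    (hf : InConeG n N f) : HasNonnegCoeffs f := by
  obtain ⟨K, c, e, hc, hrep⟩ := hf
  rw [show f = _ from funext hrep]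
  exact .sum _ fun k _ => .const_mul (hc k) <|
    .prod _ fun p _ => (HasNonnegCoeffs.inner p.1 p.2).pow _

theorem first_griffiths_gaussian_general (n N : ℕ)
    (F : Matrix (Fin N) (Fin N) ℝ) (hpos : F.PosDef)
    (hferro : ∀ i j, i ≠ j → F i j ≤ 0)
    (f : (Fin N → EuclideanSpace ℝ (Fin n)) → ℝ) (hf : InConeG n N f) :
    0 ≤ (∫ x, f x * gaussDensity n N F x) / (∫ x, gaussDensity n N F x) :=
  div_nonneg (GaussianSpin.integral_mul_exp_neg_spinEnergy_nonneg hpos hferro hf.hasNonnegCoeffs)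
    (integral_nonneg fun _ => (exp_pos _).le)

/-- First Griffiths inequality for Gaussian ferromagnetic spins: `E f ≥ 0` for `f ∈ 𝓔_G`,
where `E f = Z⁻¹ ∫ f(x) exp(-∑ f_{ij} x_i·x_j/2) dx₁⋯dx_N`. -/
theorem first_griffiths_gaussian (n N : ℕ) (hn : 1 ≤ n) (hN : 1 ≤ N)
    (F : Matrix (Fin N) (Fin N) ℝ) (hsym : F.IsSymm) (hpos : F.PosDef)
    (hferro : ∀ i j, i ≠ j → F i j ≤ 0)
    (f : (Fin N → EuclideanSpace ℝ (Fin n)) → ℝ) (hf : InConeG n N f) :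
    0 ≤ (∫ x, f x * gaussDensity n N F x) / (∫ x, gaussDensity n N F x) :=
  first_griffiths_gaussian_general n N F hpos hferro f hf
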